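/- For every x > 3, f(x) < 0.3; consequently, since sup_{x≥0} f(x) ≥ 0.346, the supremum of f over [0,∞) equals the supremum of f over [0,3]. -/

import Mathlib

/-!
Integrating the derivative `φ(t) - 2φ(t)/(t² + 1)²` of `-t φ(t)/(t² + 1)` over `(x, ∞)` gives
Gordon's inequality `M(x) ≥ x/(x² + 1)`, hence `f(x) ≤ x/(x² + 1)`, which is `< 0.3` for `x > 3`.
At `x = 1.16`, Taylor lower bounds for `exp` (integrated termwise for `∫₀ˣ e^{-t²/2} dt`) and
`π < 3.141593` give `f(1.16) ≥ 0.346`, so the points beyond `3` do not affect the supremum.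
-/

open Real MeasureTheory Finset

/-- Density of the standard normal distribution. -/
noncomputable def stdPdf (x : ℝ) : ℝ := Real.exp (-x ^ 2 / 2) / Real.sqrt (2 * Real.pi)

/-- Cumulative distribution function of the standard normal distribution. -/
noncomputable def stdCdf (x : ℝ) : ℝ := ∫ t in Set.Iic x, stdPdf t

/-- The Mills ratio. -/
noncomputable def mills (x : ℝ) : ℝ := (1 - stdCdf x) / stdPdf x

/-- The function `f(x) = x - x² M(x)`. -/
noncomputable def fMills (x : ℝ) : ℝ := x - x ^ 2 * mills x

/-- `μ`, the supremum of `f` over `[0, ∞)`. -/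
noncomputable def muMills : ℝ := sSup (fMills '' Set.Ici 0)

/-- The probability simplex. -/
def probSimplex (n : ℕ) : Set (Fin n → ℝ) :=
  {p | (∀ i, 0 ≤ p i) ∧ ∑ i, p i = 1}

/-- The positive probability simplex. -/
def probSimplexPos (n : ℕ) : Set (Fin n → ℝ) :=
  {p | (∀ i, 0 < p i) ∧ ∑ i, p i = 1}

/-- Expected number of connected components of Ross's random graph. -/
noncomputable def EC {n : ℕ} (p : Fin n → ℝ) : ℝ :=
  ∑ S ∈ (Finset.univ : Finset (Fin n)).powerset.filter (fun S => S.Nonempty),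
    (S.card - 1).factorial * ∏ j ∈ S, p j

/-- The total variation distance. -/
noncomputable def TV {n : ℕ} (p q : Fin n → ℝ) : ℝ := (∑ i, |p i - q i|) / 2

/-- The decreasing rearrangement of a vector. -/
noncomputable def decRearrange {n : ℕ} (x : Fin n → ℝ) : Fin n → ℝ :=
  fun j => x (Tuple.sort x j.rev)

/-- `Majorizes x y` means `x ≻ y`. -/
def Majorizes {n : ℕ} (x y : Fin n → ℝ) : Prop :=
  (∀ k : ℕ, ∑ j ∈ Finset.univ.filter (fun j : Fin n => (j : ℕ) < k), decRearrange y j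
      ≤ ∑ j ∈ Finset.univ.filter (fun j : Fin n => (j : ℕ) < k), decRearrange x j)
  ∧ ∑ j, x j = ∑ j, y j

/-- The coefficients `c_{k,m}`. -/
noncomputable def ckm (m k : ℕ) : ℝ := (m.choose k) * (k + 1).factorial / (m : ℝ) ^ k

/-- The sum `S_m(s)`. -/
noncomputable def Sm (m : ℕ) (s : ℝ) : ℝ := ∑ k ∈ Finset.Icc 1 m, ckm m k * (1 - s) ^ (k - 1)

/-- The quantity `B_m(s)`. -/
noncomputable def Bm (m : ℕ) (s : ℝ) : ℝ := s * ∑ k ∈ Finset.Icc 1 m, ckm m k * (1 - s) ^ k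


open Set Filter Topology ProbabilityTheory

section StandardNormal

lemma stdPdf_eq_gaussianPDFReal : stdPdf = gaussianPDFReal 0 1 := by
  ext x
  simp [stdPdf, gaussianPDFReal, div_eq_inv_mul]

lemma stdPdf_pos (x : ℝ) : 0 < stdPdf x := by
  rw [stdPdf_eq_gaussianPDFReal]
  exact gaussianPDFReal_pos _ _ _ one_ne_zero

lemma integrable_stdPdf : Integrable stdPdf := by
  rw [stdPdf_eq_gaussianPDFReal]
  exact integrable_gaussianPDFReal _ _

lemma integral_stdPdf : ∫ x, stdPdf x = 1 := by
  rw [stdPdf_eq_gaussianPDFReal]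
  exact integral_gaussianPDFReal_eq_one _ one_ne_zero

lemma continuous_stdPdf : Continuous stdPdf := by
  unfold stdPdf
  fun_prop

lemma hasDerivAt_stdPdf (x : ℝ) : HasDerivAt stdPdf (-x * stdPdf x) x := by
  have h : HasDerivAt (fun t : ℝ => -t ^ 2 / 2) (-x) x :=
    ((hasDerivAt_pow 2 x).neg.div_const 2).congr_deriv (by norm_num; ring)
  exact (h.exp.div_const (√(2 * π))).congr_deriv (by rw [stdPdf]; ring)

lemma tendsto_stdPdf_atTop : Tendsto stdPdf atTop (𝓝 0) := by
  have h : Tendsto (fun t : ℝ => -t ^ 2 / 2) atTop atBot :=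
    (tendsto_neg_atTop_atBot.comp (tendsto_pow_atTop two_ne_zero)).atBot_div_const two_pos
  have h_exp := (tendsto_exp_atBot.comp h).div_const (√(2 * π))
  rwa [zero_div] at h_exp

lemma one_sub_stdCdf (x : ℝ) : 1 - stdCdf x = ∫ t in Ioi x, stdPdf t := by
  have h := intervalIntegral.integral_Iic_add_Ioi (b := x) integrable_stdPdf.integrableOn
    integrable_stdPdf.integrableOn
  rw [integral_stdPdf] at h
  rw [stdCdf]
  linarith

lemma stdCdf_zero : stdCdf 0 = 1 / 2 := by
  have h_symm : stdCdf 0 = ∫ t in Ioi (0 : ℝ), stdPdf t := by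
    rw [stdCdf, ← neg_zero, ← integral_comp_neg_Iic]
    simp [stdPdf]
  linarith [one_sub_stdCdf 0]

lemma stdCdf_eq_half_add (x : ℝ) : stdCdf x = 1 / 2 + ∫ t in (0 : ℝ)..x, stdPdf t := by
  have h := intervalIntegral.integral_Iic_sub_Iic (a := 0) (b := x)
    integrable_stdPdf.integrableOn integrable_stdPdf.integrableOn
  rw [← stdCdf, ← stdCdf, stdCdf_zero] at h
  linarith

end StandardNormal

section MillsRatio

lemma hasDerivAt_neg_mul_stdPdf_div_sq_add_one (x : ℝ) :
    HasDerivAt (fun t => -(t * stdPdf t / (t ^ 2 + 1)))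
      (stdPdf x - 2 * stdPdf x / (x ^ 2 + 1) ^ 2) x := by
  have h_num := (hasDerivAt_id' x).mul (hasDerivAt_stdPdf x)
  have h_den := (hasDerivAt_pow 2 x).add_const 1
  refine (h_num.div h_den (by positivity)).neg.congr_deriv ?_
  field_simp
  norm_num
  ring

lemma mul_stdPdf_div_le_integral_Ioi (x : ℝ) :
    x * stdPdf x / (x ^ 2 + 1) ≤ ∫ t in Ioi x, stdPdf t := by
  set q : ℝ → ℝ := fun t => 2 * stdPdf t / (t ^ 2 + 1) ^ 2
  have hq_nonneg (t : ℝ) : 0 ≤ q t := by positivity [stdPdf_pos t]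
  have hq_cont : Continuous q :=
    (continuous_stdPdf.const_mul 2).div (by fun_prop) fun t => by positivity
  have hq_int : Integrable q := by
    refine (integrable_stdPdf.const_mul 2).mono' hq_cont.aestronglyMeasurable
      (ae_of_all _ fun t => ?_)
    rw [Real.norm_of_nonneg (hq_nonneg t)]
    exact div_le_self (by positivity [stdPdf_pos t]) (one_le_pow₀ (by nlinarith))
  have h_tendsto : Tendsto (fun t => -(t * stdPdf t / (t ^ 2 + 1))) atTop (𝓝 0) := by
    refine squeeze_zero_norm' ?_ tendsto_stdPdf_atTop
    filter_upwards [eventually_ge_atTop 0] with t ht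
    have := stdPdf_pos t
    rw [norm_neg, Real.norm_of_nonneg (by positivity), div_le_iff₀ (by positivity)]
    nlinarith [sq_nonneg (t - 1)]
  have h_ftc := integral_Ioi_of_hasDerivAt_of_tendsto' (a := x)
    (fun t _ => hasDerivAt_neg_mul_stdPdf_div_sq_add_one t)
    (integrable_stdPdf.sub hq_int).integrableOn h_tendsto
  calc x * stdPdf x / (x ^ 2 + 1) = ∫ t in Ioi x, (stdPdf t - q t) := by
        rw [h_ftc]
        ring
    _ ≤ ∫ t in Ioi x, stdPdf t :=
        integral_mono (integrable_stdPdf.sub hq_int).integrableOn integrable_stdPdf.integrableOn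
          fun t => sub_le_self _ (hq_nonneg t)

lemma div_sq_add_one_le_mills (x : ℝ) : x / (x ^ 2 + 1) ≤ mills x := by
  rw [mills, one_sub_stdCdf, le_div_iff₀ (stdPdf_pos x), div_mul_eq_mul_div]
  exact mul_stdPdf_div_le_integral_Ioi x

lemma fMills_le_div_sq_add_one (x : ℝ) : fMills x ≤ x / (x ^ 2 + 1) := by
  have h := mul_le_mul_of_nonneg_left (div_sq_add_one_le_mills x) (sq_nonneg x)
  have h_eq : x - x ^ 2 * (x / (x ^ 2 + 1)) = x / (x ^ 2 + 1) := by
    field_simp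
    ring
  rw [fMills]
  linarith

end MillsRatio

section Numerics

lemma taylor_le_exp_neg {y : ℝ} (h0 : 0 ≤ y) (h1 : y ≤ 1) :
    1 - y + y ^ 2 / 2 - y ^ 3 / 6 + y ^ 4 / 24 - y ^ 5 / 120 - 7 * y ^ 6 / 4320 ≤ exp (-y) := by
  -- the remainder bound of `Real.exp_bound` for `n = 6` is `y⁶ · 7 / (6! · 6)`
  have h := Real.exp_bound (x := -y) (by rwa [abs_neg, abs_of_nonneg h0]) (n := 6) (by norm_num)
  rw [abs_neg, abs_of_nonneg h0] at h
  norm_num [Finset.sum_range_succ, Nat.factorial] at h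
  linarith [(abs_le.1 h).1]

lemma poly_le_integral_exp_neg_sq_div_two {a : ℝ} (ha : 0 ≤ a) (ha2 : a ^ 2 ≤ 2) :
    a - a ^ 3 / 6 + a ^ 5 / 40 - a ^ 7 / 336 + a ^ 9 / 3456 - a ^ 11 / 42240
      - 7 * a ^ 13 / 3594240 ≤ ∫ t in (0 : ℝ)..a, exp (-t ^ 2 / 2) := by
  set P : ℝ → ℝ := fun t => 1 - t ^ 2 / 2 + t ^ 4 / 8 - t ^ 6 / 48 + t ^ 8 / 384
    - t ^ 10 / 3840 - 7 * t ^ 12 / 276480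
  have hP_int : IntervalIntegrable P volume 0 a := by
    apply Continuous.intervalIntegrable
    fun_prop
  have h_antideriv (t : ℝ) : HasDerivAt (fun t : ℝ => t - t ^ 3 / 6 + t ^ 5 / 40 - t ^ 7 / 336
      + t ^ 9 / 3456 - t ^ 11 / 42240 - 7 * t ^ 13 / 3594240) (P t) t := by
    have := (((((((hasDerivAt_id' t).sub ((hasDerivAt_pow 3 t).div_const 6)).add
      ((hasDerivAt_pow 5 t).div_const 40)).sub ((hasDerivAt_pow 7 t).div_const 336)).add
      ((hasDerivAt_pow 9 t).div_const 3456)).sub ((hasDerivAt_pow 11 t).div_const 42240)).sub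
      (((hasDerivAt_pow 13 t).const_mul 7).div_const 3594240))
    refine this.congr_deriv ?_
    norm_num [P]
    ring
  calc _ = ∫ t in (0 : ℝ)..a, P t := by
        rw [intervalIntegral.integral_eq_sub_of_hasDerivAt (fun t _ => h_antideriv t) hP_int]
        ring
    _ ≤ ∫ t in (0 : ℝ)..a, exp (-t ^ 2 / 2) := by
        refine intervalIntegral.integral_mono_on ha hP_int
          (Continuous.intervalIntegrable (by fun_prop) _ _) fun t ht => ?_
        have h := taylor_le_exp_neg (y := t ^ 2 / 2) (by positivity)
          (by nlinarith [ht.1, ht.2])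
        rw [neg_div]
        convert h using 1
        ring

lemma sqrt_two_mul_pi_le : √(2 * π) ≤ 2.506629 := by
  rw [sqrt_le_left (by norm_num)]
  nlinarith [pi_lt_d6]

lemma mills_eq_sub_integral_div_exp (x : ℝ) :
    mills x = (√(2 * π) / 2 - ∫ t in (0 : ℝ)..x, exp (-t ^ 2 / 2)) / exp (-x ^ 2 / 2) := by
  have hs : 0 < √(2 * π) := by positivity
  have h_int :
      ∫ t in (0 : ℝ)..x, stdPdf t = (∫ t in (0 : ℝ)..x, exp (-t ^ 2 / 2)) / √(2 * π) :=
    intervalIntegral.integral_div _ _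
  rw [mills, stdCdf_eq_half_add, h_int, stdPdf]
  field_simp
  ring

lemma le_fMills_29_div_25 : 0.346 ≤ fMills (29 / 25) := by
  have h_sqrt := sqrt_two_mul_pi_le
  have h_int : 0.944913 ≤ ∫ t in (0 : ℝ)..29 / 25, exp (-t ^ 2 / 2) :=
    le_trans (by norm_num) (poly_le_integral_exp_neg_sq_div_two (by norm_num) (by norm_num))
  have h_exp : 0.51001 ≤ exp (-(29 / 25 : ℝ) ^ 2 / 2) := by
    have h := taylor_le_exp_neg (y := 841 / 1250) (by norm_num) (by norm_num)
    rw [show -(841 / 1250 : ℝ) = -(29 / 25) ^ 2 / 2 by norm_num] at h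
    norm_num at h ⊢
    linarith
  rw [fMills, mills_eq_sub_integral_div_exp, mul_div_assoc', le_sub_comm, div_le_iff₀ (exp_pos _)]
  nlinarith

end Numerics

lemma csSup_image_eq_of_subset {α β : Type*} [ConditionallyCompleteLattice β] {f : α → β}
    {s t : Set α} (hts : t ⊆ s) (ht : t.Nonempty) (hbdd : BddAbove (f '' s))
    (hle : ∀ x ∈ s, x ∉ t → f x ≤ sSup (f '' t)) :
    sSup (f '' s) = sSup (f '' t) := by
  refine le_antisymm (csSup_le ((ht.mono hts).image f) ?_)
    (csSup_le_csSup hbdd (ht.image f) (image_mono hts))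
  rintro _ ⟨x, hxs, rfl⟩
  by_cases hxt : x ∈ t
  · exact le_csSup (hbdd.mono (image_mono hts)) (mem_image_of_mem f hxt)
  · exact hle x hxs hxt

/-- For `x > 3` we have `f(x) < 0.3`; since `sup f ≥ 0.346`, the supremum of `f`
over `[0, ∞)` equals its supremum over `[0, 3]`. -/
theorem fMills_sup_on_compact :
    (∀ x : ℝ, 3 < x → fMills x < 0.3) ∧
    0.346 ≤ sSup (fMills '' Set.Ici 0) ∧
    sSup (fMills '' Set.Ici 0) = sSup (fMills '' Set.Icc 0 3) := by
  have h_tail (x : ℝ) (hx : 3 < x) : fMills x < 0.3 := by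
    refine (fMills_le_div_sq_add_one x).trans_lt ?_
    rw [div_lt_iff₀ (by positivity)]
    nlinarith
  have h_bdd : BddAbove (fMills '' Ici 0) := by
    refine ⟨1 / 2, forall_mem_image.2 fun x _ => (fMills_le_div_sq_add_one x).trans ?_⟩
    rw [div_le_iff₀ (by positivity)]
    nlinarith [sq_nonneg (x - 1)]
  have h_witness : 0.346 ≤ sSup (fMills '' Icc 0 3) :=
    le_fMills_29_div_25.trans (le_csSup (h_bdd.mono (image_mono Set.Icc_subset_Ici_self))
      (mem_image_of_mem _ (by norm_num)))
  have h_eq := csSup_image_eq_of_subset Set.Icc_subset_Ici_self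
    (Set.nonempty_Icc.2 (by norm_num : (0 : ℝ) ≤ 3)) h_bdd
    fun x hx hx3 => by linarith [h_tail x (not_le.1 fun h => hx3 ⟨hx, h⟩)]
  exact ⟨h_tail, h_eq ▸ h_witness, h_eq⟩
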